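/- For finitely supported real sequences b = {b_I}, β = {β_J}, independent uniform ±1 random signs σ = {σ_J}, and any φ ∈ L²(ℝ), E ‖P^{0,1}_b (P^{σ,0,0}_β φ)‖_2² = Σ_{J∈𝒟} ⟨φ, h_J⟩² β_J² Σ_{I∈𝒟, I⊊J} b_I² · |I|/|J|. -/

import Mathlib

open MeasureTheory ProbabilityTheory Real Filter
open scoped ENNReal

attribute [local instance] Classical.propDecidable

noncomputable section

namespace RandomParaproducts

/-- Dyadic intervals: `(n, k)` represents `[k·2ⁿ, (k+1)·2ⁿ)`. -/
abbrev D : Type := ℤ × ℤ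

/-- The length `2ⁿ` of the dyadic interval `(n, k)`. -/
def len (I : D) : ℝ := (2 : ℝ) ^ I.1

/-- The dyadic interval `[k·2ⁿ, (k+1)·2ⁿ)` as a subset of `ℝ`. -/
def ival (I : D) : Set ℝ := Set.Ico ((I.2 : ℝ) * (2 : ℝ) ^ I.1) (((I.2 : ℝ) + 1) * (2 : ℝ) ^ I.1)

/-- The left half of a dyadic interval. -/
def lc (I : D) : D := (I.1 - 1, 2 * I.2)

/-- The right half of a dyadic interval. -/
def rc (I : D) : D := (I.1 - 1, 2 * I.2 + 1)

/-- The `L²`-normalized Haar function `h_I = h⁰_I`. -/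
def haar (I : D) : ℝ → ℝ := fun x =>
  (Real.sqrt (len I))⁻¹ *
    ((ival (rc I)).indicator (fun _ => (1 : ℝ)) x - (ival (lc I)).indicator (fun _ => (1 : ℝ)) x)

/-- The function `h¹_I = |h_I| = |I|^{-1/2} 1_I`. -/
def haar1 (I : D) : ℝ → ℝ := fun x =>
  (Real.sqrt (len I))⁻¹ * (ival I).indicator (fun _ => (1 : ℝ)) x

/-- `h^ε_I`, where `false` codes the exponent `0` and `true` codes the exponent `1`. -/
def hfun : Bool → D → ℝ → ℝ
  | false => haar
  | true => haar1

/-- The inner product `⟨f, g⟩ = ∫ f g` on `L²(ℝ)`. -/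
def ip (f g : ℝ → ℝ) : ℝ := ∫ x, f x * g x

/-- The paraproduct `P^{ε,δ}_b f = ∑_I b_I ⟨f, h^δ_I⟩ h^ε_I` with finitely supported
numerical symbol `b`. -/
def P (e d : Bool) (b : D →₀ ℝ) (f : ℝ → ℝ) : ℝ → ℝ := fun x =>
  ∑ I ∈ b.support, b I * ip f (hfun d I) * hfun e I x

/-- The signed paraproduct `P^{σ,ε,δ}_b f = ∑_I σ_I b_I ⟨f, h^δ_I⟩ h^ε_I`. -/
def Psig (σ : D → ℝ) (e d : Bool) (b : D →₀ ℝ) (f : ℝ → ℝ) : ℝ → ℝ := fun x =>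
  ∑ I ∈ b.support, σ I * (b I * ip f (hfun d I) * hfun e I x)

/-- The square of the `L²(ℝ)` norm, `‖g‖₂² = ∫ g²`. -/
def l2normSq (g : ℝ → ℝ) : ℝ := ∫ x, (g x) ^ 2

/-- The Carleson norm of a sequence `a` whose nonzero entries lie in the finite set `s`:
`sup_J (|J|⁻¹ ∑_{I ⊆ J} a_I² |I|)^{1/2}`. -/
def carlOn (s : Finset D) (a : D → ℝ) : ℝ :=
  ⨆ J : D, Real.sqrt ((len J)⁻¹ *
    ∑ I ∈ s.filter (fun I => ival I ⊆ ival J), (a I) ^ 2 * len I)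

/-- `μ` is the law of independent uniformly distributed random signs `{σ_I : I ∈ 𝒟}`. -/
def IsSignMeasure (μ : Measure (D → ℝ)) : Prop :=
  IsProbabilityMeasure μ ∧
    iIndepFun (fun I σ => σ I) μ ∧
    ∀ I : D, μ.map (fun σ => σ I) =
      (2⁻¹ : ℝ≥0∞) • (Measure.dirac (1 : ℝ) + Measure.dirac (-1 : ℝ))

/-- `f` is a unit vector of `L²(ℝ)`. -/
def UnitL2 (f : ℝ → ℝ) : Prop := MemLp f 2 volume ∧ eLpNorm f 2 volume = 1

/-- The operator norm on `L²(ℝ)` of a map defined on functions. -/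
def opNorm (T : (ℝ → ℝ) → ℝ → ℝ) : ℝ :=
  ⨆ f : {f : ℝ → ℝ // UnitL2 f}, Real.sqrt (l2normSq (T f.1))

/-- The averaged operator norm `sup_{‖f‖₂ = 1} (𝔼 ‖T_σ f‖₂²)^{1/2}`. -/
def avgOpNorm (μ : Measure (D → ℝ)) (T : (D → ℝ) → (ℝ → ℝ) → ℝ → ℝ) : ℝ :=
  ⨆ f : {f : ℝ → ℝ // UnitL2 f}, Real.sqrt (∫ σ, l2normSq (T σ f.1) ∂μ)

/-- `b` is the finite linear combination of Haar functions with coefficients `c`. -/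
def FinHaar (b : ℝ → ℝ) (c : D →₀ ℝ) : Prop :=
  b = fun x => ∑ I ∈ c.support, c I * haar I x

/-- The paraproduct `P^{ε,γ}_{b,α} f = ∑_{I} (⟨b, h^α_I⟩/|I|^{1/2}) ⟨f, h^γ_I⟩ h^ε_I` with
function symbol `b`, the sum extended over a finite set `s` containing all the
nonvanishing terms. -/
def Pb (s : Finset D) (e g a : Bool) (b : ℝ → ℝ) (f : ℝ → ℝ) : ℝ → ℝ := fun x =>
  ∑ I ∈ s, (ip b (hfun a I) / Real.sqrt (len I)) * ip f (hfun g I) * hfun e I x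

lemma measurableSet_ival (I : D) : MeasurableSet (ival I) := measurableSet_Ico

lemma volume_ival_ne_top (I : D) : volume (ival I) ≠ ⊤ := by
  simp only [ival, Real.volume_Ico]; exact ENNReal.ofReal_ne_top

lemma memℒp_haar (I : D) : MemLp (haar I) 2 volume := by
  have h1 : MemLp ((ival (rc I)).indicator (fun _ => (1 : ℝ))) 2 volume :=
    memLp_indicator_const 2 (measurableSet_ival _) 1 (Or.inr (volume_ival_ne_top _))
  have h2 : MemLp ((ival (lc I)).indicator (fun _ => (1 : ℝ))) 2 volume :=
    memLp_indicator_const 2 (measurableSet_ival _) 1 (Or.inr (volume_ival_ne_top _))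
  exact ((h1.sub h2).const_mul ((Real.sqrt (len I))⁻¹))

/-- The Haar function `h_I` as an element of `L²(ℝ)`. -/
def haarLp (I : D) : Lp ℝ 2 (volume : Measure ℝ) := (memℒp_haar I).toLp (haar I)

/-- The random Haar multiplier `T_σ f = ∑_{I ∈ 𝒟} σ_I ⟨f, h_I⟩ h_I`, as an element of
`L²(ℝ)`; the (infinite) sum converges unconditionally in `L²`. -/
def Tfull (σ : D → ℝ) (g : ℝ → ℝ) : Lp ℝ 2 (volume : Measure ℝ) :=
  ∑' I : D, (σ I * ip g (haar I)) • haarLp I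

/-- The composition `M_b T_σ M_β` applied to `f`, as a function. -/
def MbTM (σ : D → ℝ) (b β f : ℝ → ℝ) : ℝ → ℝ := fun x =>
  b x * (Tfull σ fun y => β y * f y) x

/-!
Since the Haar functions are orthonormal, `‖P^{0,1}_b g‖₂² = ∑_I b_I² ⟨g, h¹_I⟩²`, and
`⟨P^{σ,0,0}_β φ, h¹_I⟩ = ∑_J σ_J β_J ⟨φ, h_J⟩ ⟨h_J, h¹_I⟩` is a linear form in the signs. The
coordinate functions `σ ↦ σ_J` are orthonormal in `L²(μ)`, so the expectation of its square is
`∑_J β_J² ⟨φ, h_J⟩² ⟨h_J, h¹_I⟩²`. Finally, if `I ⊊ J` then `h_J = ±|J|^{-1/2}` on `I`, so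
`⟨h_J, h¹_I⟩² = |I|/|J|`; otherwise `h¹_I` is constant on `J` and `⟨h_J, h¹_I⟩ = 0` because `h_J`
has mean zero.
-/

lemma integral_mul_eq_of_eqOn {α : Type*} [MeasurableSpace α] {μ : Measure α} {f g : α → ℝ}
    {s : Set α} {c : ℝ} (hf : ∀ x ∉ s, f x = 0) (hg : Set.EqOn g (fun _ => c) s) :
    ∫ x, f x * g x ∂μ = c * ∫ x, f x ∂μ := by
  rw [← integral_const_mul]
  congr 1 with x
  by_cases hx : x ∈ s
  · rw [hg hx, mul_comm]
  · rw [hf x hx, mul_zero, zero_mul]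

lemma sq_sum_mul_eq_sum_sum {ι : Type*} (s : Finset ι) (c a : ι → ℝ) :
    (∑ i ∈ s, c i * a i) ^ 2 = ∑ i ∈ s, ∑ j ∈ s, c i * c j * (a i * a j) := by
  rw [sq, Finset.sum_mul_sum]
  exact Finset.sum_congr rfl fun i _ => Finset.sum_congr rfl fun j _ => by ring

section Orthonormal

variable {α ι : Type*} [MeasurableSpace α] {μ : Measure α} {f : ι → α → ℝ}

lemma integrable_sq_sum_mul (hint : ∀ i j, Integrable (fun x => f i x * f j x) μ)
    (s : Finset ι) (c : ι → ℝ) : Integrable (fun x => (∑ i ∈ s, c i * f i x) ^ 2) μ := by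
  simp only [sq_sum_mul_eq_sum_sum]
  exact integrable_finsetSum _ fun i _ => integrable_finsetSum _ fun j _ => (hint i j).const_mul _

lemma integral_sq_sum_mul_of_orthonormal (hint : ∀ i j, Integrable (fun x => f i x * f j x) μ)
    (hnorm : ∀ i, ∫ x, f i x * f i x ∂μ = 1)
    (horth : ∀ i j, i ≠ j → ∫ x, f i x * f j x ∂μ = 0) (s : Finset ι) (c : ι → ℝ) :
    ∫ x, (∑ i ∈ s, c i * f i x) ^ 2 ∂μ = ∑ i ∈ s, c i ^ 2 := by
  simp only [sq_sum_mul_eq_sum_sum]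
  rw [integral_finsetSum _ fun i _ =>
    integrable_finsetSum _ fun j _ => (hint i j).const_mul _]
  refine Finset.sum_congr rfl fun i hi => ?_
  rw [integral_finsetSum _ fun j _ => (hint i j).const_mul _, Finset.sum_eq_single i
    (fun j _ hji => by rw [integral_const_mul, horth i j hji.symm, mul_zero])
    (absurd hi), integral_const_mul, hnorm, mul_one, sq]

end Orthonormal

lemma ip_comm (f g : ℝ → ℝ) : ip f g = ip g f := by
  simp only [ip, mul_comm]

lemma len_pos (I : D) : 0 < len I := zpow_pos two_pos _

lemma mem_ival_iff {I : D} {x : ℝ} : x ∈ ival I ↔ ⌊x / len I⌋ = I.2 := by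
  rw [Int.floor_eq_iff, le_div_iff₀ (len_pos I), div_lt_iff₀ (len_pos I)]
  rfl

lemma floor_div_len_of_le {I J : D} (h : I.1 ≤ J.1) (x : ℝ) :
    ⌊x / len J⌋ = ⌊x / len I⌋ / (2 ^ (J.1 - I.1).toNat : ℕ) := by
  have hJ : len J = len I * (2 ^ (J.1 - I.1).toNat : ℕ) := by
    rw [len, len, Nat.cast_pow, Nat.cast_ofNat, ← zpow_natCast, ← zpow_add₀ two_ne_zero,
      Int.toNat_of_nonneg (by omega)]
    ring_nf
  rw [← Int.floor_div_natCast, hJ, div_div]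

-- Membership in `ival J` depends only on `⌊x / len I⌋`, which is constant on `ival I`.
lemma subset_or_disjoint {I J : D} (h : I.1 ≤ J.1) :
    ival I ⊆ ival J ∨ Disjoint (ival I) (ival J) := by
  by_cases hIJ : I.2 / (2 ^ (J.1 - I.1).toNat : ℕ) = J.2
  · left
    intro x hx
    rw [mem_ival_iff] at hx ⊢
    rw [floor_div_len_of_le h, hx, hIJ]
  · right
    refine Set.disjoint_left.2 fun x hxI hxJ => hIJ ?_
    rw [mem_ival_iff] at hxI hxJ
    rw [← hxI, ← floor_div_len_of_le h, hxJ]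

lemma disjoint_of_fst_eq {I J : D} (h : I.1 = J.1) (hne : I ≠ J) :
    Disjoint (ival I) (ival J) := by
  refine Set.disjoint_left.2 fun x hxI hxJ => hne (Prod.ext h ?_)
  rw [mem_ival_iff] at hxI hxJ
  rw [← hxI, ← hxJ, len, len, h]

lemma ival_nonempty (I : D) : (ival I).Nonempty :=
  ⟨I.2 * len I, mem_ival_iff.2 (by rw [mul_div_cancel_right₀ _ (len_pos I).ne', Int.floor_intCast])⟩

lemma not_ssubset_of_disjoint {I J : D} (h : Disjoint (ival I) (ival J)) : ¬ ival I ⊂ ival J := by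
  intro hIJ
  obtain ⟨x, hx⟩ := ival_nonempty I
  exact Set.disjoint_left.1 h hx (hIJ.1 hx)

lemma disjoint_lc_rc (I : D) : Disjoint (ival (lc I)) (ival (rc I)) :=
  disjoint_of_fst_eq rfl (by simp [lc, rc])

lemma ival_lc_union_rc (I : D) : ival (lc I) ∪ ival (rc I) = ival I := by
  have h2 : (2 : ℝ) ^ I.1 = 2 * 2 ^ (I.1 - 1) := by
    rw [← zpow_one_add₀ two_ne_zero, add_sub_cancel]
  have hpos : (0 : ℝ) < 2 ^ (I.1 - 1) := zpow_pos two_pos _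
  simp only [ival, lc, rc, h2]
  push_cast
  rw [Set.Ico_union_Ico_eq_Ico (by nlinarith) (by nlinarith)]
  congr 1 <;> ring

lemma lc_subset (I : D) : ival (lc I) ⊆ ival I := ival_lc_union_rc I ▸ Set.subset_union_left

lemma rc_subset (I : D) : ival (rc I) ⊆ ival I := ival_lc_union_rc I ▸ Set.subset_union_right

lemma ssubset_of_subset_lc {I J : D} (h : ival I ⊆ ival (lc J)) : ival I ⊂ ival J := by
  refine ⟨h.trans (lc_subset J), fun hJI => ?_⟩
  obtain ⟨x, hx⟩ := ival_nonempty (rc J)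
  exact Set.disjoint_left.1 (disjoint_lc_rc J) (h (hJI (rc_subset J hx))) hx

lemma ssubset_of_subset_rc {I J : D} (h : ival I ⊆ ival (rc J)) : ival I ⊂ ival J := by
  refine ⟨h.trans (rc_subset J), fun hJI => ?_⟩
  obtain ⟨x, hx⟩ := ival_nonempty (lc J)
  exact Set.disjoint_left.1 (disjoint_lc_rc J) hx (h (hJI (lc_subset J hx)))

lemma subset_lc_or_subset_rc_or_disjoint {I J : D} (h : I.1 < J.1) :
    ival I ⊆ ival (lc J) ∨ ival I ⊆ ival (rc J) ∨ Disjoint (ival I) (ival J) := by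
  have hl : I.1 ≤ (lc J).1 := by simp only [lc]; omega
  have hr : I.1 ≤ (rc J).1 := by simp only [rc]; omega
  rcases subset_or_disjoint hl with hl | hl
  · exact Or.inl hl
  rcases subset_or_disjoint hr with hr | hr
  · exact Or.inr (Or.inl hr)
  · exact Or.inr (Or.inr (ival_lc_union_rc J ▸ Set.disjoint_union_right.2 ⟨hl, hr⟩))

lemma haar_eqOn_lc (I : D) : Set.EqOn (haar I) (fun _ => -(√(len I))⁻¹) (ival (lc I)) := by
  intro x hx
  simp [haar, hx, Set.disjoint_left.1 (disjoint_lc_rc I) hx]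

lemma haar_eqOn_rc (I : D) : Set.EqOn (haar I) (fun _ => (√(len I))⁻¹) (ival (rc I)) := by
  intro x hx
  simp [haar, hx, Set.disjoint_right.1 (disjoint_lc_rc I) hx]

lemma haar_eq_zero_of_notMem {I : D} {x : ℝ} (hx : x ∉ ival I) : haar I x = 0 := by
  have hl : x ∉ ival (lc I) := fun h => hx (lc_subset I h)
  have hr : x ∉ ival (rc I) := fun h => hx (rc_subset I h)
  simp [haar, hl, hr]

lemma haar1_eqOn (I : D) : Set.EqOn (haar1 I) (fun _ => (√(len I))⁻¹) (ival I) := by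
  intro x hx
  simp [haar1, hx]

lemma haar1_eq_zero_of_notMem {I : D} {x : ℝ} (hx : x ∉ ival I) : haar1 I x = 0 := by
  simp [haar1, hx]

lemma haar_mul_self (I : D) (x : ℝ) : haar I x * haar I x = haar1 I x * haar1 I x := by
  by_cases hl : x ∈ ival (lc I)
  · rw [haar_eqOn_lc I hl, haar1_eqOn I (lc_subset I hl), neg_mul_neg]
  by_cases hr : x ∈ ival (rc I)
  · rw [haar_eqOn_rc I hr, haar1_eqOn I (rc_subset I hr)]
  have hx : x ∉ ival I := by rw [← ival_lc_union_rc]; exact fun h => h.elim hl hr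
  rw [haar_eq_zero_of_notMem hx, haar1_eq_zero_of_notMem hx]

lemma integrable_indicator_ival (I : D) : Integrable ((ival I).indicator fun _ => (1 : ℝ)) :=
  (integrableOn_const (volume_ival_ne_top I)).integrable_indicator (measurableSet_ival I)

lemma integral_indicator_ival (I : D) : ∫ x, (ival I).indicator (fun _ => (1 : ℝ)) x = len I := by
  have h := len_pos I
  unfold len at h
  rw [integral_indicator_const _ (measurableSet_ival I), smul_eq_mul, mul_one, Measure.real,
    ival, Real.volume_Ico, ENNReal.toReal_ofReal (by nlinarith)]
  unfold len
  ring

lemma integral_haar (I : D) : ∫ x, haar I x = 0 := by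
  unfold haar
  rw [integral_const_mul, integral_sub (integrable_indicator_ival _) (integrable_indicator_ival _),
    integral_indicator_ival, integral_indicator_ival]
  simp [len, lc, rc]

lemma integral_haar1 (I : D) : ∫ x, haar1 I x = √(len I) := by
  unfold haar1
  rw [integral_const_mul, integral_indicator_ival, ← div_eq_inv_mul, Real.div_sqrt]

lemma memLp_haar1 (I : D) : MemLp (haar1 I) 2 volume :=
  (memLp_indicator_const 2 (measurableSet_ival I) 1 (Or.inr (volume_ival_ne_top I))).const_mul _

lemma integrable_haar_mul (I : D) {g : ℝ → ℝ} (hg : MemLp g 2 volume) :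
    Integrable fun x => haar I x * g x :=
  (memℒp_haar I).integrable_mul hg

lemma haar_eqOn_zero_of_disjoint {I J : D} (h : Disjoint (ival I) (ival J)) :
    Set.EqOn (haar I) (fun _ => 0) (ival J) :=
  fun _ hx => haar_eq_zero_of_notMem (Set.disjoint_right.1 h hx)

lemma haar1_eqOn_zero_of_disjoint {I J : D} (h : Disjoint (ival I) (ival J)) :
    Set.EqOn (haar1 I) (fun _ => 0) (ival J) :=
  fun _ hx => haar1_eq_zero_of_notMem (Set.disjoint_right.1 h hx)

lemma ip_haar_of_eqOn {I : D} {g : ℝ → ℝ} {c : ℝ} (hg : Set.EqOn g (fun _ => c) (ival I)) :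
    ip (haar I) g = 0 := by
  rw [ip, integral_mul_eq_of_eqOn (fun _ => haar_eq_zero_of_notMem) hg, integral_haar, mul_zero]

lemma ip_haar1_of_eqOn {I : D} {g : ℝ → ℝ} {c : ℝ} (hg : Set.EqOn g (fun _ => c) (ival I)) :
    ip (haar1 I) g = c * √(len I) := by
  rw [ip, integral_mul_eq_of_eqOn (fun _ => haar1_eq_zero_of_notMem) hg, integral_haar1]

lemma ip_haar_self (I : D) : ip (haar I) (haar I) = 1 := by
  simp only [ip, haar_mul_self]
  rw [← ip, ip_haar1_of_eqOn (haar1_eqOn I), inv_mul_cancel₀ (Real.sqrt_pos.2 (len_pos I)).ne']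

lemma exists_haar_eqOn_const {I J : D} (h : I.1 ≤ J.1) (hne : I ≠ J) :
    ∃ c, Set.EqOn (haar J) (fun _ => c) (ival I) := by
  rcases h.eq_or_lt with heq | hlt
  · exact ⟨0, haar_eqOn_zero_of_disjoint (disjoint_of_fst_eq heq hne).symm⟩
  rcases subset_lc_or_subset_rc_or_disjoint hlt with hs | hs | hd
  · exact ⟨_, (haar_eqOn_lc J).mono hs⟩
  · exact ⟨_, (haar_eqOn_rc J).mono hs⟩
  · exact ⟨0, haar_eqOn_zero_of_disjoint hd.symm⟩

lemma ip_haar_of_ne {I J : D} (hne : I ≠ J) : ip (haar I) (haar J) = 0 := by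
  rcases le_total I.1 J.1 with h | h
  · obtain ⟨c, hc⟩ := exists_haar_eqOn_const h hne
    exact ip_haar_of_eqOn hc
  · obtain ⟨c, hc⟩ := exists_haar_eqOn_const h hne.symm
    rw [ip_comm]
    exact ip_haar_of_eqOn hc

lemma sq_ip_haar_haar1 (J I : D) :
    ip (haar J) (haar1 I) ^ 2 = if ival I ⊂ ival J then len I / len J else 0 := by
  have hJ : (√(len J))⁻¹ ^ 2 = (len J)⁻¹ := by rw [inv_pow, Real.sq_sqrt (len_pos J).le]
  have of_eqOn : ∀ {c : ℝ}, Set.EqOn (haar J) (fun _ => c) (ival I) → c ^ 2 = (len J)⁻¹ →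
      ip (haar J) (haar1 I) ^ 2 = len I / len J := fun hc hc2 => by
    rw [ip_comm, ip_haar1_of_eqOn hc, mul_pow, hc2, Real.sq_sqrt (len_pos I).le, inv_mul_eq_div]
  rcases lt_or_ge I.1 J.1 with hlt | hle
  · rcases subset_lc_or_subset_rc_or_disjoint hlt with hs | hs | hd
    · rw [if_pos (ssubset_of_subset_lc hs), of_eqOn ((haar_eqOn_lc J).mono hs) (by rw [neg_sq, hJ])]
    · rw [if_pos (ssubset_of_subset_rc hs), of_eqOn ((haar_eqOn_rc J).mono hs) hJ]
    · rw [if_neg (not_ssubset_of_disjoint hd),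
        ip_haar_of_eqOn (haar1_eqOn_zero_of_disjoint hd), sq, zero_mul]
  · rcases subset_or_disjoint hle with hs | hd
    · rw [if_neg fun h => h.2 hs, ip_haar_of_eqOn ((haar1_eqOn I).mono hs), sq, zero_mul]
    · rw [if_neg (not_ssubset_of_disjoint hd.symm),
        ip_haar_of_eqOn (haar1_eqOn_zero_of_disjoint hd.symm), sq, zero_mul]

lemma l2normSq_sum_haar (s : Finset D) (c : D → ℝ) :
    l2normSq (fun x => ∑ I ∈ s, c I * haar I x) = ∑ I ∈ s, c I ^ 2 :=
  integral_sq_sum_mul_of_orthonormal (fun I J => integrable_haar_mul I (memℒp_haar J))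
    ip_haar_self (fun _ _ => ip_haar_of_ne) s c

namespace IsSignMeasure

variable {μ : Measure (D → ℝ)}

lemma ae_eq_one_or_eq_neg_one (hμ : IsSignMeasure μ) (J : D) :
    ∀ᵐ σ ∂μ, σ J = 1 ∨ σ J = -1 := by
  have hpm : MeasurableSet {y : ℝ | y = 1 ∨ y = -1} :=
    (measurableSet_singleton 1).union (measurableSet_singleton (-1))
  refine (ae_map_iff (f := fun σ : D → ℝ => σ J) (measurable_pi_apply J).aemeasurable hpm).1 ?_
  rw [hμ.2.2 J]
  refine Measure.ae_smul_measure ?_ _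
  rw [ae_add_measure_iff, ae_dirac_iff hpm, ae_dirac_iff hpm]
  exact ⟨Or.inl rfl, Or.inr rfl⟩

lemma integral_eval (hμ : IsSignMeasure μ) (J : D) : ∫ σ, σ J ∂μ = 0 := by
  rw [← integral_map (f := fun y : ℝ => y) (φ := fun σ : D → ℝ => σ J)
    (measurable_pi_apply J).aemeasurable aestronglyMeasurable_id, hμ.2.2 J,
    integral_smul_measure, integral_add_measure (integrable_dirac enorm_lt_top)
      (integrable_dirac enorm_lt_top), integral_dirac, integral_dirac, add_neg_cancel, smul_zero]

lemma integrable_eval_mul_eval (hμ : IsSignMeasure μ) (J K : D) :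
    Integrable (fun σ => σ J * σ K) μ := by
  have := hμ.1
  refine Integrable.of_bound (f := fun σ : D → ℝ => σ J * σ K)
    ((measurable_pi_apply J).mul (measurable_pi_apply K)).aestronglyMeasurable 1 ?_
  filter_upwards [hμ.ae_eq_one_or_eq_neg_one J, hμ.ae_eq_one_or_eq_neg_one K] with σ hJ hK
  rcases hJ with hJ | hJ <;> rcases hK with hK | hK <;> simp [hJ, hK]

lemma integral_eval_mul_self (hμ : IsSignMeasure μ) (J : D) : ∫ σ, σ J * σ J ∂μ = 1 := by
  have := hμ.1
  rw [integral_congr_ae ((hμ.ae_eq_one_or_eq_neg_one J).mono fun σ hσ =>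
    show σ J * σ J = (fun _ => (1 : ℝ)) σ by rcases hσ with h | h <;> simp [h])]
  simp

lemma integral_eval_mul_eval_of_ne (hμ : IsSignMeasure μ) {J K : D} (hJK : J ≠ K) :
    ∫ σ, σ J * σ K ∂μ = 0 := by
  rw [(hμ.2.1.indepFun hJK).integral_fun_mul_eq_mul_integral
    (measurable_pi_apply J).aestronglyMeasurable (measurable_pi_apply K).aestronglyMeasurable,
    hμ.integral_eval, zero_mul]

lemma integrable_sq_sum (hμ : IsSignMeasure μ) (s : Finset D) (c : D → ℝ) :
    Integrable (fun σ => (∑ J ∈ s, c J * σ J) ^ 2) μ :=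
  integrable_sq_sum_mul (f := fun (J : D) (σ : D → ℝ) => σ J) hμ.integrable_eval_mul_eval s c

lemma integral_sq_sum (hμ : IsSignMeasure μ) (s : Finset D) (c : D → ℝ) :
    ∫ σ, (∑ J ∈ s, c J * σ J) ^ 2 ∂μ = ∑ J ∈ s, c J ^ 2 :=
  integral_sq_sum_mul_of_orthonormal (f := fun (J : D) (σ : D → ℝ) => σ J) hμ.integrable_eval_mul_eval
    hμ.integral_eval_mul_self (fun _ _ => hμ.integral_eval_mul_eval_of_ne) s c

end IsSignMeasure

lemma ip_psig_haar (σ : D → ℝ) (β : D →₀ ℝ) (φ : ℝ → ℝ) {g : ℝ → ℝ} (hg : MemLp g 2 volume) :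
    ip (Psig σ false false β φ) g =
      ∑ J ∈ β.support, (β J * ip φ (haar J) * ip (haar J) g) * σ J := by
  have hsum : ∀ x, Psig σ false false β φ x * g x =
      ∑ J ∈ β.support, (β J * ip φ (haar J) * σ J) * (haar J x * g x) := fun x => by
    rw [Psig, Finset.sum_mul]
    exact Finset.sum_congr rfl fun J _ => by simp only [hfun]; ring
  rw [ip, funext hsum, integral_finsetSum _ fun J _ => (integrable_haar_mul J hg).const_mul _]
  exact Finset.sum_congr rfl fun J _ => by rw [integral_const_mul, ← ip]; ring

theorem statement6_general (b β : D →₀ ℝ) (μ : Measure (D → ℝ)) (hμ : IsSignMeasure μ)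
    (φ : ℝ → ℝ) :
    ∫ σ, l2normSq (P false true b (Psig σ false false β φ)) ∂μ =
      ∑ J ∈ β.support, (ip φ (haar J)) ^ 2 * (β J) ^ 2 *
        ∑ I ∈ b.support.filter (fun I => ival I ⊂ ival J),
          (b I) ^ 2 * (len I / len J) := by
  have hl2 : ∀ σ, l2normSq (P false true b (Psig σ false false β φ)) =
      ∑ I ∈ b.support, b I ^ 2 *
        (∑ J ∈ β.support, (β J * ip φ (haar J) * ip (haar J) (haar1 I)) * σ J) ^ 2 := fun σ => by
    rw [show P false true b (Psig σ false false β φ) = fun x => ∑ I ∈ b.support,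
      (b I * ip (Psig σ false false β φ) (haar1 I)) * haar I x from rfl, l2normSq_sum_haar]
    simp only [ip_psig_haar σ β φ (memLp_haar1 _), mul_pow]
  simp only [hl2]
  rw [integral_finsetSum _ fun I _ => (hμ.integrable_sq_sum _ _).const_mul _]
  simp only [integral_const_mul, hμ.integral_sq_sum, Finset.mul_sum, Finset.sum_filter]
  rw [Finset.sum_comm]
  refine Finset.sum_congr rfl fun J _ => Finset.sum_congr rfl fun I _ => ?_
  rw [mul_pow, mul_pow, sq_ip_haar_haar1]
  split_ifs <;> ring

/-- `𝔼 ‖P^{0,1}_b (P^{σ,0,0}_β φ)‖₂²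
= ∑_J ⟨φ, h_J⟩² β_J² ∑_{I ⊊ J} b_I² |I|/|J|`. -/
theorem statement6 (b β : D →₀ ℝ) (μ : Measure (D → ℝ)) (hμ : IsSignMeasure μ)
    (φ : ℝ → ℝ) (hφ : MemLp φ 2 volume) :
    ∫ σ, l2normSq (P false true b (Psig σ false false β φ)) ∂μ =
      ∑ J ∈ β.support, (ip φ (haar J)) ^ 2 * (β J) ^ 2 *
        ∑ I ∈ b.support.filter (fun I => ival I ⊂ ival J),
          (b I) ^ 2 * (len I / len J) :=
  statement6_general b β μ hμ φ

end RandomParaproducts
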